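/- arXiv:1603.08596 — 3 statements merged into one kernel-verified Lean document; each statement's English description precedes it below -/
import Mathlib

section
/- Let c_n be defined by c_1 = 1 and c_n = (n-1) Σ_{k=1}^{n-1} c_k c_{n-k}. Then c_{n-1}/c_n = 1/(2n) + 1/(4n²) + O(1/n³) as n → ∞; equivalently, n²·(c_{n-1}/c_n − 1/(2n)) → 1/4. -/
/-!
Write `S n = ∑_{k=1}^{n-1} c k c (n-k)`, so that `c n = (n-1) S n`. The two end terms give
`S (n+1) ≥ 2 c n`, hence `c (n+1) ≥ 2n c n`; together with the reverse bound
`c (n+1) ≤ 2(n+1) c n` (proved by strong induction) this makes `k ↦ c k c (n-k)` decrease on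
`[1, n/2]`. Hence in `S n` only the three outermost terms on each side,
`2 c (n-1) + 2 c (n-2) + 8 c (n-3)`, matter: the `n-7` inner ones are each at most
`c 4 c (n-4) = O(c (n-1) / n³)`. This pins the ratio down to
`2n - 1 ≤ c n / c (n-1) ≤ 2n - 1 + 8/n`, and `n² (1/r - 1/(2n)) → 1/4` whenever
`r - 2n → -1`.
-/

open Filter Topology

structure ChordRecurrence (c : ℕ → ℕ) : Prop where
  one : c 1 = 1
  rec_eq : ∀ n, 2 ≤ n → c n = (n - 1) * ∑ k ∈ Finset.Ico 1 n, c k * c (n - k)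

theorem Finset.sum_Ico_one_add_seven {M : Type*} [AddCommMonoid M] (f : ℕ → M) (m : ℕ) :
    ∑ k ∈ Finset.Ico 1 (m + 7), f k =
      f 1 + f 2 + f 3 + ∑ k ∈ Finset.Ico 4 (m + 4), f k +
        f (m + 4) + f (m + 5) + f (m + 6) := by
  rw [Finset.sum_eq_sum_Ico_succ_bot (by omega), Finset.sum_eq_sum_Ico_succ_bot (by omega),
    Finset.sum_eq_sum_Ico_succ_bot (by omega), show m + 7 = m + 4 + 1 + 1 + 1 by ring,
    Finset.sum_Ico_succ_top (by omega), Finset.sum_Ico_succ_top (by omega),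
    Finset.sum_Ico_succ_top (by omega)]
  norm_num [add_assoc]

/-- `S (m+7) ≤ chordSumBound m · c (m+6)`: the terms `2 c (m+5)`, `8 c (m+4)` and the `m` inner
terms `≤ 27 c (m+3)` of `S (m+7)` are compared with `c (m+6)` through `c (j+1) ≥ 2j c j`. -/
noncomputable def chordSumBound (x : ℝ) : ℝ :=
  2 + 1 / (x + 5) + 2 / ((x + 5) * (x + 4)) + 27 * x / (8 * (x + 5) * (x + 4) * (x + 3))

theorem mul_chordSumBound_le {x : ℝ} (hx : 0 ≤ x) :
    (x + 6) * chordSumBound x ≤ 2 * (x + 7) := by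
  rw [chordSumBound]
  field_simp
  nlinarith [pow_nonneg hx 3, pow_nonneg hx 2]

theorem mul_mul_chordSumBound_le {x : ℝ} (hx : 0 ≤ x) :
    (x + 7) * (x + 6) * chordSumBound x ≤ 2 * (x + 7) ^ 2 - (x + 7) + 8 := by
  rw [chordSumBound]
  field_simp
  nlinarith [pow_nonneg hx 3, pow_nonneg hx 2, pow_nonneg hx 4]

namespace ChordRecurrence

variable {c : ℕ → ℕ}

theorem pos (hc : ChordRecurrence c) {n : ℕ} (hn : 1 ≤ n) : 0 < c n := by
  induction n using Nat.strong_induction_on with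
  | _ n ih =>
    rcases (show n = 1 ∨ 2 ≤ n by omega) with rfl | hn2
    · simp [hc.one]
    · rw [hc.rec_eq n hn2]
      refine Nat.mul_pos (by omega) (Finset.sum_pos' (fun _ _ => Nat.zero_le _) ⟨1, ?_, ?_⟩)
      · simp only [Finset.mem_Ico]; omega
      · exact Nat.mul_pos (ih 1 (by omega) le_rfl) (ih (n - 1) (by omega) (by omega))

theorem small_values (hc : ChordRecurrence c) :
    c 2 = 1 ∧ c 3 = 4 ∧ c 4 = 27 ∧ c 5 = 248 ∧ c 6 = 2830 := by
  have h1 := hc.one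
  have h2 : c 2 = 1 := by rw [hc.rec_eq 2 le_rfl]; simp [h1]
  have h3 : c 3 = 4 := by
    rw [hc.rec_eq 3 (by norm_num)]; simp [Finset.sum_Ico_succ_top, h1, h2]
  have h4 : c 4 = 27 := by
    rw [hc.rec_eq 4 (by norm_num)]; simp [Finset.sum_Ico_succ_top, h1, h2, h3]
  have h5 : c 5 = 248 := by
    rw [hc.rec_eq 5 (by norm_num)]; simp [Finset.sum_Ico_succ_top, h1, h2, h3, h4]
  have h6 : c 6 = 2830 := by
    rw [hc.rec_eq 6 (by norm_num)]; simp [Finset.sum_Ico_succ_top, h1, h2, h3, h4, h5]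
  exact ⟨h2, h3, h4, h5, h6⟩

theorem sum_Ico_one_eq (hc : ChordRecurrence c) (m : ℕ) :
    ∑ k ∈ Finset.Ico 1 (m + 7), c k * c (m + 7 - k) =
      2 * c (m + 6) + 2 * c (m + 5) + 8 * c (m + 4) +
        ∑ k ∈ Finset.Ico 4 (m + 4), c k * c (m + 7 - k) := by
  obtain ⟨h2, h3, -⟩ := hc.small_values
  rw [Finset.sum_Ico_one_add_seven]
  simp only [show m + 7 - (m + 4) = 3 by omega, show m + 7 - (m + 5) = 2 by omega,
    show m + 7 - (m + 6) = 1 by omega, show m + 7 - 1 = m + 6 by omega,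
    show m + 7 - 2 = m + 5 by omega, show m + 7 - 3 = m + 4 by omega, hc.one, h2, h3]
  ring

theorem cast_eq_mul_sum (hc : ChordRecurrence c) (m : ℕ) :
    (c (m + 7) : ℝ) =
      (m + 6) * ((∑ k ∈ Finset.Ico 1 (m + 7), c k * c (m + 7 - k) : ℕ) : ℝ) := by
  rw [hc.rec_eq (m + 7) (by omega)]
  push_cast
  ring

theorem two_mul_mul_le_succ (hc : ChordRecurrence c) {n : ℕ} (hn : 2 ≤ n) :
    2 * n * c n ≤ c (n + 1) := by
  have hsub : ({1, n} : Finset ℕ) ⊆ Finset.Ico 1 (n + 1) := by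
    intro k hk
    simp only [Finset.mem_insert, Finset.mem_singleton] at hk
    simp only [Finset.mem_Ico]; omega
  have hends := Finset.sum_le_sum_of_subset hsub (f := fun k => c k * c (n + 1 - k))
  rw [Finset.sum_pair (by omega)] at hends
  simp only [Nat.add_sub_cancel, show n + 1 - n = 1 by omega, hc.one] at hends
  rw [hc.rec_eq (n + 1) (by omega), Nat.add_sub_cancel]
  nlinarith

theorem mul_sub_le_mul_sub (hc : ChordRecurrence c) {n : ℕ}
    (hup : ∀ j, 1 ≤ j → j + 1 < n → c (j + 1) ≤ 2 * (j + 1) * c j)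
    {a k : ℕ} (ha : 1 ≤ a) (hak : a ≤ k) (hkn : 2 * k ≤ n) :
    c k * c (n - k) ≤ c a * c (n - a) := by
  induction k, hak using Nat.le_induction with
  | base => exact le_rfl
  | succ k hak ih =>
    refine le_trans ?_ (ih (by omega))
    have hupper : c (k + 1) ≤ 2 * (k + 1) * c k := hup k (by omega) (by omega)
    have hlower : 2 * (n - (k + 1)) * c (n - (k + 1)) ≤ c (n - k) := by
      have := hc.two_mul_mul_le_succ (n := n - (k + 1)) (by omega)
      rwa [show n - (k + 1) + 1 = n - k by omega] at this
    refine Nat.le_of_mul_le_mul_left ?_ (show 0 < 2 * (n - (k + 1)) by omega)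
    calc 2 * (n - (k + 1)) * (c (k + 1) * c (n - (k + 1)))
        = c (k + 1) * (2 * (n - (k + 1)) * c (n - (k + 1))) := by ring
      _ ≤ 2 * (k + 1) * c k * c (n - k) := Nat.mul_le_mul hupper hlower
      _ ≤ 2 * (n - (k + 1)) * c k * c (n - k) := by gcongr; omega
      _ = 2 * (n - (k + 1)) * (c k * c (n - k)) := by ring

theorem sum_Ico_four_le (hc : ChordRecurrence c) {m : ℕ}
    (hup : ∀ j, 1 ≤ j → j + 1 < m + 7 → c (j + 1) ≤ 2 * (j + 1) * c j) :
    ∑ k ∈ Finset.Ico 4 (m + 4), c k * c (m + 7 - k) ≤ m * (27 * c (m + 3)) := by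
  have hterm : ∀ k ∈ Finset.Ico 4 (m + 4), c k * c (m + 7 - k) ≤ 27 * c (m + 3) := by
    intro k hk
    rw [Finset.mem_Ico] at hk
    rw [← hc.small_values.2.2.1, show m + 3 = m + 7 - 4 by omega]
    rcases le_total (2 * k) (m + 7) with hk2 | hk2
    · exact hc.mul_sub_le_mul_sub hup (by norm_num) hk.1 hk2
    · have := hc.mul_sub_le_mul_sub hup (a := 4) (k := m + 7 - k) (by norm_num)
        (by omega) (by omega)
      rwa [show m + 7 - (m + 7 - k) = k by omega, mul_comm (c (m + 7 - k))] at this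
  simpa using Finset.sum_le_card_nsmul _ _ _ hterm

theorem cast_sum_le_chordSumBound_mul (hc : ChordRecurrence c) {m : ℕ}
    (hup : ∀ j, 1 ≤ j → j + 1 < m + 7 → c (j + 1) ≤ 2 * (j + 1) * c j) :
    ((∑ k ∈ Finset.Ico 1 (m + 7), c k * c (m + 7 - k) : ℕ) : ℝ) ≤
      chordSumBound m * c (m + 6) := by
  have hstep : ∀ j : ℕ, 2 ≤ j → (c j : ℝ) ≤ c (j + 1) / (2 * j) := fun j hj => by
    rw [le_div_iff₀ (by positivity)]
    exact_mod_cast (mul_comm (c j) (2 * j)).trans_le (hc.two_mul_mul_le_succ hj)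
  have h5 : (c (m + 5) : ℝ) ≤ c (m + 6) / (2 * (m + 5)) := by
    simpa using hstep (m + 5) (by omega)
  have h4 : (c (m + 4) : ℝ) ≤ c (m + 6) / (2 * (m + 5)) / (2 * (m + 4)) := by
    have := hstep (m + 4) (by omega)
    push_cast at this
    exact this.trans (by gcongr)
  have h3 : (c (m + 3) : ℝ) ≤ c (m + 6) / (2 * (m + 5)) / (2 * (m + 4)) / (2 * (m + 3)) := by
    have := hstep (m + 3) (by omega)
    push_cast at this
    exact this.trans (by gcongr)
  have hmid : ((∑ k ∈ Finset.Ico 4 (m + 4), c k * c (m + 7 - k) : ℕ) : ℝ) ≤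
      m * (27 * c (m + 3)) := by
    exact_mod_cast hc.sum_Ico_four_le hup
  rw [hc.sum_Ico_one_eq]
  push_cast at hmid ⊢
  calc _ ≤ 2 * (c (m + 6) : ℝ) + 2 * c (m + 5) + 8 * c (m + 4) + m * (27 * c (m + 3)) := by
        gcongr
    _ ≤ 2 * (c (m + 6) : ℝ) + 2 * (c (m + 6) / (2 * (m + 5))) +
          8 * (c (m + 6) / (2 * (m + 5)) / (2 * (m + 4))) +
          m * (27 * (c (m + 6) / (2 * (m + 5)) / (2 * (m + 4)) / (2 * (m + 3)))) := by
        gcongr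
    _ = chordSumBound m * c (m + 6) := by
        rw [chordSumBound]
        field_simp
        ring

theorem succ_le_two_mul_succ_mul (hc : ChordRecurrence c) {n : ℕ} (hn : 1 ≤ n) :
    c (n + 1) ≤ 2 * (n + 1) * c n := by
  induction n using Nat.strong_induction_on with
  | _ n ih =>
    obtain ⟨h2, h3, h4, h5, h6⟩ := hc.small_values
    rcases (show n ≤ 5 ∨ 6 ≤ n by omega) with hn5 | hn6
    · interval_cases n <;> simp [hc.one, h2, h3, h4, h5, h6]
    · obtain ⟨m, rfl⟩ := Nat.exists_eq_add_of_le' hn6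
      have hS := hc.cast_sum_le_chordSumBound_mul (m := m) fun j hj _ => ih j (by omega) hj
      have hx : (0 : ℝ) ≤ m := m.cast_nonneg
      have key : (c (m + 7) : ℝ) ≤ 2 * (m + 7) * c (m + 6) :=
        calc (c (m + 7) : ℝ) ≤ (m + 6) * (chordSumBound m * c (m + 6)) := by
              rw [hc.cast_eq_mul_sum]; gcongr
          _ = (m + 6) * chordSumBound m * c (m + 6) := by ring
          _ ≤ 2 * (m + 7) * c (m + 6) := by gcongr ?_ * _; exact mul_chordSumBound_le hx
      exact_mod_cast key

theorem two_mul_add_mul_le (hc : ChordRecurrence c) (m : ℕ) :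
    (2 * m + 13) * c (m + 6) ≤ c (m + 7) := by
  have hgrow : c (m + 6) ≤ 2 * (m + 6) * c (m + 5) :=
    hc.succ_le_two_mul_succ_mul (n := m + 5) (by omega)
  rw [hc.rec_eq (m + 7) (by omega), show m + 7 - 1 = m + 6 by omega, hc.sum_Ico_one_eq]
  calc (2 * m + 13) * c (m + 6) = (m + 6) * (2 * c (m + 6)) + c (m + 6) := by ring
    _ ≤ (m + 6) * (2 * c (m + 6)) + (m + 6) * (2 * c (m + 5)) := by
        gcongr; exact hgrow.trans_eq (by ring)
    _ ≤ _ := by rw [← mul_add]; exact Nat.mul_le_mul_left _ (by omega)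

theorem add_seven_mul_le (hc : ChordRecurrence c) (m : ℕ) :
    ((m : ℝ) + 7) * c (m + 7) ≤ (2 * (m + 7) ^ 2 - (m + 7) + 8) * c (m + 6) := by
  have hS := hc.cast_sum_le_chordSumBound_mul (m := m) fun j hj _ =>
    hc.succ_le_two_mul_succ_mul hj
  have hx : (0 : ℝ) ≤ m := m.cast_nonneg
  calc ((m : ℝ) + 7) * c (m + 7) ≤ (m + 7) * ((m + 6) * (chordSumBound m * c (m + 6))) := by
        rw [hc.cast_eq_mul_sum]; gcongr
    _ = (m + 7) * (m + 6) * chordSumBound m * c (m + 6) := by ring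
    _ ≤ (2 * (m + 7) ^ 2 - (m + 7) + 8) * c (m + 6) := by
        gcongr ?_ * _; exact mul_mul_chordSumBound_le hx

theorem div_pred_sub_mem_Icc (hc : ChordRecurrence c) {n : ℕ} (hn : 7 ≤ n) :
    (c n : ℝ) / c (n - 1) - 2 * n ∈ Set.Icc (-1 : ℝ) (-1 + 8 / n) := by
  obtain ⟨m, rfl⟩ := Nat.exists_eq_add_of_le' hn
  have hpos : (0 : ℝ) < c (m + 6) := by exact_mod_cast hc.pos (n := m + 6) (by omega)
  have hlow : ((2 * m + 13 : ℕ) : ℝ) * c (m + 6) ≤ c (m + 7) := by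
    exact_mod_cast hc.two_mul_add_mul_le m
  have hup := hc.add_seven_mul_le m
  simp only [Set.mem_Icc]
  push_cast at hlow ⊢
  constructor
  · rw [le_sub_iff_add_le, le_div_iff₀ hpos]; linarith
  · rw [sub_le_iff_le_add, div_le_iff₀ hpos]
    have hm : (0 : ℝ) < m + 7 := by positivity
    have : (-1 + 8 / (m + 7) + 2 * (m + 7)) * (c (m + 6) : ℝ) =
        (2 * (m + 7) ^ 2 - (m + 7) + 8) * c (m + 6) / (m + 7) := by
      field_simp; ring
    rw [this, le_div_iff₀ hm]
    linarith

theorem tendsto_div_pred_sub (hc : ChordRecurrence c) :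
    Tendsto (fun n : ℕ => (c n : ℝ) / c (n - 1) - 2 * n) atTop (𝓝 (-1)) := by
  have hupper : Tendsto (fun n : ℕ => -1 + 8 / (n : ℝ)) atTop (𝓝 (-1)) := by
    simpa using tendsto_const_nhds.add (tendsto_const_div_atTop_nhds_zero_nat (8 : ℝ))
  refine tendsto_of_tendsto_of_tendsto_of_le_of_le' tendsto_const_nhds hupper ?_ ?_
  · filter_upwards [eventually_ge_atTop 7] with n hn using (hc.div_pred_sub_mem_Icc hn).1
  · filter_upwards [eventually_ge_atTop 7] with n hn using (hc.div_pred_sub_mem_Icc hn).2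

end ChordRecurrence

theorem tendsto_sq_mul_inv_sub_inv {r : ℕ → ℝ}
    (h : Tendsto (fun n : ℕ => r n - 2 * n) atTop (𝓝 (-1))) :
    Tendsto (fun n : ℕ => (n : ℝ) ^ 2 * ((r n)⁻¹ - 1 / (2 * n))) atTop (𝓝 (1 / 4)) := by
  set d : ℕ → ℝ := fun n => r n - 2 * n
  have hd_div : Tendsto (fun n : ℕ => d n / n) atTop (𝓝 0) := by
    simpa [div_eq_mul_inv] using h.mul tendsto_inv_atTop_nhds_zero_nat
  have hlim : Tendsto (fun n : ℕ => -d n / (2 * (2 + d n / n))) atTop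
      (𝓝 (-(-1) / (2 * (2 + 0)))) :=
    h.neg.div ((tendsto_const_nhds.add hd_div).const_mul 2) (by norm_num)
  rw [show (-(-1) : ℝ) / (2 * (2 + 0)) = 1 / 4 by norm_num] at hlim
  refine hlim.congr' ?_
  filter_upwards [h.eventually (lt_mem_nhds (show (-2 : ℝ) < -1 by norm_num)),
    eventually_ge_atTop 1] with n hdn hn
  have hn' : (1 : ℝ) ≤ n := by exact_mod_cast hn
  have hr : r n = d n + 2 * n := by simp [d]
  have hrpos : 0 < d n + 2 * n := by linarith
  rw [hr, show 2 + d n / n = (d n + 2 * n) / n by field_simp; ring]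
  field_simp
  ring

/-- with `c 1 = 1` and `c n = (n-1)·Σ_{k=1}^{n-1} c k·c (n-k)` for `n ≥ 2`,
one has `c_{n-1}/c_n = 1/(2n) + 1/(4n²) + O(1/n³)`; equivalently
`n²·(c_{n-1}/c_n - 1/(2n)) → 1/4` as `n → ∞`. -/
theorem stmt4 (c : ℕ → ℕ) (h1 : c 1 = 1)
    (hrec : ∀ n : ℕ, 2 ≤ n → c n = (n - 1) * ∑ k ∈ Finset.Ico 1 n, c k * c (n - k)) :
    Tendsto
      (fun n : ℕ => (n : ℝ) ^ 2 * ((c (n - 1) : ℝ) / (c n : ℝ) - 1 / (2 * (n : ℝ))))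
      atTop (nhds (1 / 4)) := by
  simpa only [inv_div] using
    tendsto_sq_mul_inv_sub_inv (ChordRecurrence.mk h1 hrec).tendsto_div_pred_sub
end

section
/- Let c_n be the number of connected chord diagrams with n chords. For fixed j ≥ 2, the quantity (n-1) · Σ_{k=j}^{n-j} c_k c_{n-k} / c_n is O(1/n^{j-1}) as n → ∞. -/
open scoped Classical

namespace ChordStmt

/-- Chord `p` has an outgoing edge to chord `q` in the oriented intersection graph. -/
def crosses (p q : ℕ × ℕ) : Prop := p.1 < q.1 ∧ q.1 < p.2 ∧ p.2 < q.2

/-- A finite set of pairs `(a,b)` with `a < b` and all endpoints distinct. -/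
def IsMatching (D : Finset (ℕ × ℕ)) : Prop :=
  (∀ p ∈ D, p.1 < p.2) ∧
  ∀ p ∈ D, ∀ q ∈ D, p ≠ q → p.1 ≠ q.1 ∧ p.1 ≠ q.2 ∧ p.2 ≠ q.1 ∧ p.2 ≠ q.2

def points (D : Finset (ℕ × ℕ)) : Finset ℕ := D.biUnion fun p => {p.1, p.2}

/-- A chord diagram with `n` chords: a perfect matching of `{1, …, 2n}`. -/
def IsDiagramOn (n : ℕ) (D : Finset (ℕ × ℕ)) : Prop :=
  IsMatching D ∧ points D = Finset.Icc 1 (2 * n)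

def Step (D : Finset (ℕ × ℕ)) (a b : ℕ × ℕ) : Prop :=
  a ∈ D ∧ b ∈ D ∧ (crosses a b ∨ crosses b a)

def Reach (D : Finset (ℕ × ℕ)) (a b : ℕ × ℕ) : Prop :=
  Relation.ReflTransGen (Step D) a b

/-- The diagram is connected (its intersection graph is connected). -/
def ConnectedDiagram (D : Finset (ℕ × ℕ)) : Prop :=
  D.Nonempty ∧ ∀ p ∈ D, ∀ q ∈ D, Reach D p q

/-- A chord is terminal if it has no outgoing edge in the oriented intersection graph. -/
def IsTerminal (D : Finset (ℕ × ℕ)) (p : ℕ × ℕ) : Prop :=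
  p ∈ D ∧ ∀ q ∈ D, ¬ crosses p q

/-- The number of connected chord diagrams with `n` chords. -/
noncomputable def c (n : ℕ) : ℕ :=
  Set.ncard {D : Finset (ℕ × ℕ) | IsDiagramOn n D ∧ ConnectedDiagram D}

/-- The root chord: the chord with the smallest first endpoint. -/
noncomputable def rootChord (D : Finset (ℕ × ℕ)) : ℕ × ℕ :=
  if h : ∃ p ∈ D, ∀ q ∈ D, p.1 ≤ q.1 then h.choose else (0, 0)

lemma rootChord_mem {D : Finset (ℕ × ℕ)} (h : D.Nonempty) : rootChord D ∈ D := by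
  have hex : ∃ p ∈ D, ∀ q ∈ D, p.1 ≤ q.1 := by
    obtain ⟨p, hp, hmin⟩ := D.exists_min_image Prod.fst h
    exact ⟨p, hp, hmin⟩
  rw [rootChord, dif_pos hex]
  exact hex.choose_spec.1

/-- The connected component of the chord `p` in the diagram `D`. -/
noncomputable def componentOf (D : Finset (ℕ × ℕ)) (p : ℕ × ℕ) : Finset (ℕ × ℕ) :=
  D.filter fun q => Reach D p q

/-- The list of chords of `D` in intersection order: the root chord first, then
recursively the chords of the connected components of `D` minus the root chord,
components ordered by first vertex (equivalently: repeatedly split off the component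
of the current root chord). -/
noncomputable def interOrder (D : Finset (ℕ × ℕ)) : List (ℕ × ℕ) :=
  if h : D.Nonempty then
    if hK : componentOf D (rootChord D) = D then
      rootChord D :: interOrder (D.erase (rootChord D))
    else
      interOrder (componentOf D (rootChord D)) ++
        interOrder (D \ componentOf D (rootChord D))
  else []
termination_by D.card
decreasing_by
  · exact Finset.card_erase_lt_of_mem (rootChord_mem h)
  · exact Finset.card_lt_card
      (Finset.ssubset_iff_subset_ne.mpr ⟨Finset.filter_subset _ _, hK⟩)
  · exact Finset.card_lt_card
      (Finset.sdiff_ssubset (Finset.filter_subset _ _)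
        ⟨rootChord D, Finset.mem_filter.mpr ⟨rootChord_mem h, Relation.ReflTransGen.refl⟩⟩)

/-- `b(C)`: the (1-based) index of the first terminal chord in the intersection order. -/
noncomputable def bIndex (D : Finset (ℕ × ℕ)) : ℕ :=
  (interOrder D).findIdx (fun p => decide (IsTerminal D p)) + 1

/-- `b_{n,k}`: the number of connected chord diagrams `C` with `n` chords and `b(C) ≥ n - k`. -/
noncomputable def bCount (n k : ℕ) : ℕ :=
  Set.ncard {D : Finset (ℕ × ℕ) |
    IsDiagramOn n D ∧ ConnectedDiagram D ∧ n - k ≤ bIndex D}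

/-- The terminal chords of `D` are exactly the last `k` chords in intersection order. -/
def TerminalExactlyLast (D : Finset (ℕ × ℕ)) (k : ℕ) : Prop :=
  ∀ i : Fin (interOrder D).length,
    IsTerminal D ((interOrder D).get i) ↔ (interOrder D).length - k ≤ (i : ℕ)

/-- `o_{n,k}`: connected diagrams with `n` chords whose terminal chords are exactly
the last `k` chords in intersection order. -/
noncomputable def oCount (n k : ℕ) : ℕ :=
  Set.ncard {D : Finset (ℕ × ℕ) |
    IsDiagramOn n D ∧ ConnectedDiagram D ∧ TerminalExactlyLast D k}

end ChordStmt

/-!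
Inserting into a diagram on `n` chords a new chord from a point `a` to a new last point
`2n + 2`, after shifting the old points `≥ a` up by one, is injective in `(a, D)`. Every diagram
on `n + 1` chords arises this way with `1 ≤ a ≤ 2n + 1`, so `c_n ≤ (2n - 1)!!`; and for
`2 ≤ a ≤ 2n` some old chord straddles `a`, so connectedness is preserved and
`c_{n+1} ≥ (2n - 1) c_n`. Iterating the latter,
`c_k c_{n-k} ≤ c_n ∏_{i<k} (2i + 1) / (2(n - k + i) - 1)`. For `j ≤ k ≤ n/2` the first `j`
factors are `O(1/n)` and the others at most `2/3`, so, folding the sum at `n/2`, it is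
`O(c_n / n^j)`.
-/

namespace ChordStmt

open Finset

section Matchings

variable {D E : Finset (ℕ × ℕ)} {p q : ℕ × ℕ}

lemma mem_points {x : ℕ} : x ∈ points D ↔ ∃ p ∈ D, p.1 = x ∨ p.2 = x := by
  simp [points, eq_comm]

lemma fst_mem_points (hp : p ∈ D) : p.1 ∈ points D := mem_points.2 ⟨p, hp, .inl rfl⟩

lemma snd_mem_points (hp : p ∈ D) : p.2 ∈ points D := mem_points.2 ⟨p, hp, .inr rfl⟩

lemma points_insert : points (insert p D) = insert p.1 (insert p.2 (points D)) := by
  simp [points, biUnion_insert]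

lemma points_image (f : ℕ → ℕ) : points (D.image (Prod.map f f)) = (points D).image f := by
  ext x
  simp only [mem_points, mem_image, Prod.exists, Prod.map_apply, Prod.mk.injEq]
  constructor
  · rintro ⟨_, _, ⟨a, b, hab, rfl, rfl⟩, rfl | rfl⟩
    exacts [⟨a, ⟨a, b, hab, .inl rfl⟩, rfl⟩, ⟨b, ⟨a, b, hab, .inr rfl⟩, rfl⟩]
  · rintro ⟨y, ⟨a, b, hab, rfl | rfl⟩, rfl⟩
    exacts [⟨_, _, ⟨a, b, hab, rfl, rfl⟩, .inl rfl⟩, ⟨_, _, ⟨a, b, hab, rfl, rfl⟩, .inr rfl⟩]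

lemma IsMatching.subset (hD : IsMatching D) (h : E ⊆ D) : IsMatching E :=
  ⟨fun p hp => hD.1 p (h hp), fun p hp q hq => hD.2 p (h hp) q (h hq)⟩

lemma IsMatching.eq_of_snd_eq (hD : IsMatching D) (hp : p ∈ D) (hq : q ∈ D) (h : p.2 = q.2) :
    p = q := by
  by_contra hne
  exact (hD.2 p hp q hq hne).2.2.2 h

lemma IsMatching.insert (hD : IsMatching D) (hp : p.1 < p.2) (h₁ : p.1 ∉ points D)
    (h₂ : p.2 ∉ points D) : IsMatching (insert p D) := by
  have hfresh : ∀ q ∈ D, q.1 ≠ p.1 ∧ q.1 ≠ p.2 ∧ q.2 ≠ p.1 ∧ q.2 ≠ p.2 := fun q hq =>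
    ⟨fun h => h₁ (h ▸ fst_mem_points hq), fun h => h₂ (h ▸ fst_mem_points hq),
      fun h => h₁ (h ▸ snd_mem_points hq), fun h => h₂ (h ▸ snd_mem_points hq)⟩
  refine ⟨fun q hq => ?_, fun q hq r hr hne => ?_⟩
  · rcases mem_insert.1 hq with rfl | hq
    exacts [hp, hD.1 q hq]
  · rcases mem_insert.1 hq with rfl | hq' <;> rcases mem_insert.1 hr with rfl | hr'
    · exact absurd rfl hne
    · have := hfresh r hr'; omega
    · have := hfresh q hq'; omega
    · exact hD.2 q hq' r hr' hne

lemma IsMatching.image (hD : IsMatching D) {f : ℕ → ℕ} (hf : StrictMonoOn f (points D)) :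
    IsMatching (D.image (Prod.map f f)) := by
  have hinj := hf.injOn
  refine ⟨?_, ?_⟩
  · intro x hx
    obtain ⟨q, hq, rfl⟩ := mem_image.1 hx
    exact hf (fst_mem_points hq) (snd_mem_points hq) (hD.1 q hq)
  · intro x hx y hy hne
    obtain ⟨q, hq, rfl⟩ := mem_image.1 hx
    obtain ⟨r, hr, rfl⟩ := mem_image.1 hy
    have hqr : q ≠ r := by rintro rfl; exact hne rfl
    obtain ⟨h₁, h₂, h₃, h₄⟩ := hD.2 q hq r hr hqr
    have hq₁ := fst_mem_points hq; have hq₂ := snd_mem_points hq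
    have hr₁ := fst_mem_points hr; have hr₂ := snd_mem_points hr
    exact ⟨fun h => h₁ (hinj hq₁ hr₁ h), fun h => h₂ (hinj hq₁ hr₂ h),
      fun h => h₃ (hinj hq₂ hr₁ h), fun h => h₄ (hinj hq₂ hr₂ h)⟩

lemma IsMatching.points_erase (hD : IsMatching D) (hp : p ∈ D) :
    points (D.erase p) = ((points D).erase p.1).erase p.2 := by
  ext x
  simp only [mem_erase, mem_points]
  constructor
  · rintro ⟨q, ⟨hqp, hq⟩, hx⟩
    obtain ⟨h₁, h₂, h₃, h₄⟩ := hD.2 q hq p hp hqp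
    refine ⟨?_, ?_, q, hq, hx⟩ <;> rcases hx with rfl | rfl <;> assumption
  · rintro ⟨hx₂, hx₁, q, hq, hx⟩
    refine ⟨q, ⟨?_, hq⟩, hx⟩
    rintro rfl
    rcases hx with rfl | rfl <;> contradiction

lemma crosses_map {f : ℕ → ℕ} (hf : StrictMono f) (h : crosses p q) :
    crosses (Prod.map f f p) (Prod.map f f q) :=
  ⟨hf h.1, hf h.2.1, hf h.2.2⟩

lemma IsDiagramOn.bounds {n : ℕ} (hD : IsDiagramOn n D) (hp : p ∈ D) :
    1 ≤ p.1 ∧ p.1 < p.2 ∧ p.2 ≤ 2 * n := by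
  have h₁ := fst_mem_points hp
  have h₂ := snd_mem_points hp
  rw [hD.2, mem_Icc] at h₁ h₂
  exact ⟨h₁.1, hD.1.1 p hp, h₂.2⟩

end Matchings

section Insertion

def shiftUp (a x : ℕ) : ℕ := if x < a then x else x + 1

def shiftDown (a x : ℕ) : ℕ := if x < a then x else x - 1

lemma shiftUp_strictMono (a : ℕ) : StrictMono (shiftUp a) := by
  intro x y h
  unfold shiftUp
  split_ifs <;> omega

lemma shiftUp_shiftDown {a x : ℕ} (h : x ≠ a) : shiftUp a (shiftDown a x) = x := by
  unfold shiftUp shiftDown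
  split_ifs <;> omega

lemma image_shiftUp_Icc {a N : ℕ} (ha : a ∈ Icc 1 (N + 1)) :
    (Icc 1 N).image (shiftUp a) = (Icc 1 (N + 1)).erase a := by
  rw [mem_Icc] at ha
  ext x
  simp only [mem_image, mem_erase, mem_Icc, shiftUp]
  constructor
  · rintro ⟨y, hy, rfl⟩
    split_ifs <;> omega
  · intro hx
    refine if h : x < a then ⟨x, by omega, if_pos h⟩ else ⟨x - 1, by omega, ?_⟩
    rw [if_neg (by omega)]
    omega

lemma image_shiftDown_Icc {a N : ℕ} (ha : a ∈ Icc 1 (N + 1)) :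
    ((Icc 1 (N + 1)).erase a).image (shiftDown a) = Icc 1 N := by
  rw [mem_Icc] at ha
  ext x
  simp only [mem_image, mem_erase, mem_Icc, shiftDown]
  constructor
  · rintro ⟨y, hy, rfl⟩
    split_ifs <;> omega
  · intro hx
    refine if h : x < a then ⟨x, by omega, if_pos h⟩ else ⟨x + 1, by omega, ?_⟩
    rw [if_neg (by omega)]
    omega

lemma shiftDown_strictMonoOn (a : ℕ) : StrictMonoOn (shiftDown a) {x | x ≠ a} := by
  intro x (hx : x ≠ a) y (hy : y ≠ a) h
  unfold shiftDown
  split_ifs <;> omega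

def insertChord (n a : ℕ) (D : Finset (ℕ × ℕ)) : Finset (ℕ × ℕ) :=
  insert (a, 2 * n + 2) (D.image (Prod.map (shiftUp a) (shiftUp a)))

variable {n a : ℕ} {D : Finset (ℕ × ℕ)}

lemma points_image_shiftUp (hD : IsDiagramOn n D) (ha : a ∈ Icc 1 (2 * n + 1)) :
    points (D.image (Prod.map (shiftUp a) (shiftUp a))) = (Icc 1 (2 * n + 1)).erase a := by
  rw [points_image, hD.2, image_shiftUp_Icc ha]

lemma isDiagramOn_insertChord (hD : IsDiagramOn n D) (ha : a ∈ Icc 1 (2 * n + 1)) :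
    IsDiagramOn (n + 1) (insertChord n a D) := by
  have hpts := points_image_shiftUp hD ha
  rw [mem_Icc] at ha
  refine ⟨(hD.1.image ((shiftUp_strictMono a).strictMonoOn _)).insert ?_ ?_ ?_, ?_⟩
  · show a < 2 * n + 2
    omega
  · simp [hpts]
  · simp [hpts]
  · rw [insertChord, points_insert, hpts]
    ext x
    simp only [mem_insert, mem_erase, mem_Icc]
    omega

lemma insertChord_inj {a' : ℕ} {D' : Finset (ℕ × ℕ)} (hD : IsDiagramOn n D)
    (hD' : IsDiagramOn n D') (ha : a ∈ Icc 1 (2 * n + 1)) (ha' : a' ∈ Icc 1 (2 * n + 1))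
    (h : insertChord n a D = insertChord n a' D') : a = a' ∧ D = D' := by
  have hmem : (a, 2 * n + 2) ∈ insertChord n a' D' := h ▸ mem_insert_self _ _
  have haa' : a = a' := congrArg Prod.fst <|
    (isDiagramOn_insertChord hD' ha').1.eq_of_snd_eq hmem (mem_insert_self _ _) rfl
  subst haa'
  have hnew : (a, 2 * n + 2) ∉ D.image (Prod.map (shiftUp a) (shiftUp a)) := fun hmem => by
    simpa [points_image_shiftUp hD ha] using snd_mem_points hmem
  have hnew' : (a, 2 * n + 2) ∉ D'.image (Prod.map (shiftUp a) (shiftUp a)) := fun hmem => by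
    simpa [points_image_shiftUp hD' ha] using snd_mem_points hmem
  have himage := congrArg (·.erase (a, 2 * n + 2)) h
  simp only [insertChord, erase_insert hnew, erase_insert hnew'] at himage
  have hinj := Prod.map_injective.2 ⟨(shiftUp_strictMono a).injective,
    (shiftUp_strictMono a).injective⟩
  exact ⟨rfl, image_injective hinj himage⟩

lemma exists_insertChord_eq (hD : IsDiagramOn (n + 1) D) :
    ∃ a ∈ Icc 1 (2 * n + 1), ∃ D₀, IsDiagramOn n D₀ ∧ insertChord n a D₀ = D := by
  have htop : 2 * n + 2 ∈ points D := by rw [hD.2, mem_Icc]; omega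
  obtain ⟨p, hp, hpe⟩ := mem_points.1 htop
  have hpb := hD.bounds hp
  have hp₂ : p.2 = 2 * n + 2 := by omega
  have ha : p.1 ∈ Icc 1 (2 * n + 1) := mem_Icc.2 (by omega)
  set a := p.1
  set E := D.erase p
  have hE : points E = (Icc 1 (2 * n + 1)).erase a := by
    rw [hD.1.points_erase hp, hD.2, hp₂]
    ext x
    simp only [mem_erase, mem_Icc]
    omega
  have hEa : ∀ x ∈ points E, x ≠ a := fun x hx => by
    rw [hE] at hx
    exact ne_of_mem_erase hx
  refine ⟨a, ha, E.image (Prod.map (shiftDown a) (shiftDown a)), ⟨?_, ?_⟩, ?_⟩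
  · exact (hD.1.subset (erase_subset p D)).image ((shiftDown_strictMonoOn a).mono hEa)
  · rw [points_image, hE, image_shiftDown_Icc ha]
  · have hround : Set.EqOn
        (Prod.map (shiftUp a) (shiftUp a) ∘ Prod.map (shiftDown a) (shiftDown a)) id E :=
      fun q hq => Prod.ext (shiftUp_shiftDown (hEa _ (fst_mem_points hq)))
        (shiftUp_shiftDown (hEa _ (snd_mem_points hq)))
    rw [insertChord, image_image, image_congr hround, image_id, ← hp₂,
      Finset.insert_erase hp]

lemma ConnectedDiagram.exists_straddle (hC : ConnectedDiagram D) (hlt : ∀ p ∈ D, p.1 < p.2)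
    {x y a : ℕ} (hx : x ∈ points D) (hy : y ∈ points D) (hxa : x < a) (hay : a ≤ y) :
    ∃ p ∈ D, p.1 < a ∧ a ≤ p.2 := by
  by_contra! hcon
  obtain ⟨p, hp, hpx⟩ := mem_points.1 hx
  obtain ⟨q, hq, hqy⟩ := mem_points.1 hy
  have hp₁ : p.1 < a := by have := hlt p hp; omega
  have hq₂ : a ≤ q.2 := by have := hlt q hq; omega
  have hreach : ∀ r, Reach D p r → r.1 < a := by
    intro r hr
    induction hr with
    | refl => exact hp₁
    | tail _ hs ih =>
      have := hcon _ hs.1 ih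
      rcases hs.2.2 with h | h <;> [exact h.2.1.trans this; exact h.1.trans ih]
  exact absurd (hcon q hq (hreach q (hC.2 p hp q hq))) (not_lt.2 hq₂)

lemma connectedDiagram_insertChord (hD : IsDiagramOn n D) (hC : ConnectedDiagram D)
    (ha : a ∈ Icc 2 (2 * n)) : ConnectedDiagram (insertChord n a D) := by
  rw [mem_Icc] at ha
  set σ := Prod.map (shiftUp a) (shiftUp a)
  set new := (a, 2 * n + 2)
  have hσmem : ∀ p ∈ D, σ p ∈ insertChord n a D := fun p hp =>
    mem_insert_of_mem (mem_image_of_mem σ hp)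
  have hlift : ∀ p ∈ D, ∀ q ∈ D, Reach (insertChord n a D) (σ p) (σ q) := fun p hp q hq =>
    (hC.2 p hp q hq).lift σ fun r s hrs => ⟨hσmem r hrs.1, hσmem s hrs.2.1,
      hrs.2.2.imp (crosses_map (shiftUp_strictMono a)) (crosses_map (shiftUp_strictMono a))⟩
  obtain ⟨s, hs, hs₁, hs₂⟩ := hC.exists_straddle hD.1.1 (x := 1) (y := 2 * n)
    (by rw [hD.2, mem_Icc]; omega) (by rw [hD.2, mem_Icc]; omega) (by omega) ha.2
  have hsb := hD.bounds hs
  have hcross : crosses (σ s) new := by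
    simp only [crosses, σ, new, Prod.map_fst, Prod.map_snd, shiftUp]
    split_ifs <;> omega
  have hnew : new ∈ insertChord n a D := mem_insert_self _ _
  have hto : ∀ q ∈ insertChord n a D, Reach (insertChord n a D) q new := by
    intro q hq
    rcases mem_insert.1 hq with rfl | hq
    · exact .refl
    · obtain ⟨p, hp, rfl⟩ := mem_image.1 hq
      exact (hlift p hp s hs).tail ⟨hσmem s hs, hnew, .inl hcross⟩
  have hfrom : ∀ q ∈ insertChord n a D, Reach (insertChord n a D) new q := by
    intro q hq
    rcases mem_insert.1 hq with rfl | hq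
    · exact .refl
    · obtain ⟨p, hp, rfl⟩ := mem_image.1 hq
      exact (hlift s hs p hp).head ⟨hnew, hσmem s hs, .inr hcross⟩
  exact ⟨⟨new, hnew⟩, fun p hp q hq => (hto p hp).trans (hfrom q hq)⟩

end Insertion

section Counting

noncomputable def diagrams (n : ℕ) : Finset (Finset (ℕ × ℕ)) :=
  ((Icc 1 (2 * n) ×ˢ Icc 1 (2 * n)).powerset).filter (IsDiagramOn n)

variable {n : ℕ} {D : Finset (ℕ × ℕ)}

lemma mem_diagrams : D ∈ diagrams n ↔ IsDiagramOn n D := by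
  refine ⟨fun h => (mem_filter.1 h).2, fun h => mem_filter.2 ⟨mem_powerset.2 fun p hp => ?_, h⟩⟩
  rw [mem_product, ← h.2]
  exact ⟨fst_mem_points hp, snd_mem_points hp⟩

lemma c_eq_card : c n = #((diagrams n).filter ConnectedDiagram) := by
  rw [c, ← Set.ncard_coe_finset]
  congr 1
  ext D
  simp [mem_diagrams]

lemma card_diagrams_succ_le (n : ℕ) : #(diagrams (n + 1)) ≤ (2 * n + 1) * #(diagrams n) := by
  have hsub : diagrams (n + 1) ⊆
      (Icc 1 (2 * n + 1) ×ˢ diagrams n).image fun x => insertChord n x.1 x.2 := by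
    intro D hD
    obtain ⟨a, ha, D₀, hD₀, rfl⟩ := exists_insertChord_eq (mem_diagrams.1 hD)
    exact mem_image.2 ⟨(a, D₀), mem_product.2 ⟨ha, mem_diagrams.2 hD₀⟩, rfl⟩
  calc #(diagrams (n + 1)) ≤ #(Icc 1 (2 * n + 1) ×ˢ diagrams n) :=
        (card_le_card hsub).trans card_image_le
    _ = (2 * n + 1) * #(diagrams n) := by rw [card_product, Nat.card_Icc, Nat.add_sub_cancel]

lemma card_diagrams_le (n : ℕ) : #(diagrams n) ≤ ∏ i ∈ range n, (2 * i + 1) := by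
  induction n with
  | zero => exact (card_filter_le _ _).trans (by simp)
  | succ n ih =>
    rw [prod_range_succ, mul_comm]
    exact (card_diagrams_succ_le n).trans (Nat.mul_le_mul_left _ ih)

lemma c_le_prod_odd (n : ℕ) : c n ≤ ∏ i ∈ range n, (2 * i + 1) :=
  c_eq_card.trans_le ((card_filter_le _ _).trans (card_diagrams_le n))

lemma mul_c_le_c_succ (n : ℕ) : (2 * n - 1) * c n ≤ c (n + 1) := by
  rw [c_eq_card, c_eq_card]
  have hmaps : Set.MapsTo (fun x : ℕ × Finset (ℕ × ℕ) => insertChord n x.1 x.2)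
      ↑(Icc 2 (2 * n) ×ˢ (diagrams n).filter ConnectedDiagram)
      ↑((diagrams (n + 1)).filter ConnectedDiagram) := by
    rintro ⟨a, D⟩ h
    simp only [coe_product, Set.mem_prod, mem_coe, mem_filter, mem_diagrams] at h ⊢
    have ha : a ∈ Icc 1 (2 * n + 1) := by simp only [mem_Icc] at h ⊢; omega
    exact ⟨isDiagramOn_insertChord h.2.1 ha, connectedDiagram_insertChord h.2.1 h.2.2 h.1⟩
  have hinj : Set.InjOn (fun x : ℕ × Finset (ℕ × ℕ) => insertChord n x.1 x.2)
      ↑(Icc 2 (2 * n) ×ˢ (diagrams n).filter ConnectedDiagram) := by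
    rintro ⟨a, D⟩ h ⟨a', D'⟩ h' heq
    simp only [coe_product, Set.mem_prod, mem_coe, mem_filter, mem_diagrams, mem_Icc] at h h'
    obtain ⟨rfl, rfl⟩ := insertChord_inj h.2.1 h'.2.1 (mem_Icc.2 (by omega))
      (mem_Icc.2 (by omega)) heq
    rfl
  simpa [card_product, Nat.card_Icc] using card_le_card_of_injOn _ hmaps hinj

lemma c_one_pos : 0 < c 1 := by
  rw [c_eq_card]
  refine card_pos.2 ⟨{(1, 2)}, mem_filter.2 ⟨mem_diagrams.2 ⟨⟨?_, ?_⟩, ?_⟩, ?_, ?_⟩⟩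
  · simp
  · simp
  · decide
  · simp
  · simp only [mem_singleton]
    rintro p rfl q rfl
    exact .refl

lemma c_pos (hn : 1 ≤ n) : 0 < c n := by
  induction n, hn using Nat.le_induction with
  | base => exact c_one_pos
  | succ n hn ih => exact lt_of_lt_of_le (Nat.mul_pos (by omega) ih) (mul_c_le_c_succ n)

end Counting

section Asymptotics

lemma c_mul_prod_le {m : ℕ} (hm : 1 ≤ m) (k : ℕ) :
    (c m : ℝ) * ∏ i ∈ range k, (2 * (m + i : ℝ) - 1) ≤ c (m + k) := by
  induction k with
  | zero => simp
  | succ k ih =>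
    have hstep : (2 * (m + k : ℝ) - 1) * c (m + k) ≤ c (m + k + 1) := by
      have := mul_c_le_c_succ (m + k)
      rw [← Nat.cast_le (α := ℝ), Nat.cast_mul, Nat.cast_sub (by omega)] at this
      push_cast at this
      exact this
    have hpos : (0 : ℝ) ≤ 2 * (m + k : ℝ) - 1 := by
      have : (1 : ℝ) ≤ m := by exact_mod_cast hm
      linarith
    rw [prod_range_succ, ← mul_assoc, ← add_assoc]
    nlinarith

lemma c_mul_c_le {k m : ℕ} (hm : 1 ≤ m) :
    (c k * c m : ℝ) ≤ c (m + k) * ∏ i ∈ range k, (2 * i + 1 : ℝ) / (2 * (m + i : ℝ) - 1) := by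
  have hden : 0 < ∏ i ∈ range k, (2 * (m + i : ℝ) - 1) := prod_pos fun i _ => by
    have : (1 : ℝ) ≤ m := by exact_mod_cast hm
    linarith [(Nat.cast_nonneg i : (0 : ℝ) ≤ i)]
  have hodd : (c k : ℝ) ≤ ∏ i ∈ range k, (2 * i + 1 : ℝ) := by exact_mod_cast c_le_prod_odd k
  rw [prod_div_distrib, mul_div_assoc', le_div_iff₀ hden, mul_assoc]
  calc (c k : ℝ) * (c m * ∏ i ∈ range k, (2 * (m + i : ℝ) - 1))
      ≤ (∏ i ∈ range k, (2 * i + 1 : ℝ)) * c (m + k) :=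
        mul_le_mul hodd (c_mul_prod_le hm k) (by positivity) (by positivity)
    _ = _ := mul_comm _ _

lemma prod_odd_div_le {j k m : ℕ} (hjk : j ≤ k) (hkm : k ≤ m) (hm : 2 ≤ m) :
    ∏ i ∈ range k, (2 * i + 1 : ℝ) / (2 * (m + i : ℝ) - 1) ≤
      (2 * j / m) ^ j * (2 / 3) ^ (k - j) := by
  have hm' : (2 : ℝ) ≤ m := by exact_mod_cast hm
  have hden : ∀ i : ℕ, 0 < 2 * (m + i : ℝ) - 1 := fun i => by
    linarith [(Nat.cast_nonneg i : (0 : ℝ) ≤ i)]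
  have hfactor : ∀ i : ℕ, 0 ≤ (2 * i + 1 : ℝ) / (2 * (m + i : ℝ) - 1) := fun i =>
    (div_pos (by positivity) (hden i)).le
  have hsmall : ∀ i ∈ range j, (2 * i + 1 : ℝ) / (2 * (m + i : ℝ) - 1) ≤ 2 * j / m := by
    intro i hi
    have hij : (i : ℝ) + 1 ≤ j := by exact_mod_cast mem_range.1 hi
    rw [div_le_div_iff₀ (hden i) (by positivity)]
    nlinarith [(Nat.cast_nonneg i : (0 : ℝ) ≤ i)]
  have hgeom : ∀ i ∈ Ico j k, (2 * i + 1 : ℝ) / (2 * (m + i : ℝ) - 1) ≤ 2 / 3 := by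
    intro i hi
    have him : (i : ℝ) + 1 ≤ m := by exact_mod_cast (mem_Ico.1 hi).2.trans_le hkm
    rw [div_le_div_iff₀ (hden i) (by norm_num)]
    linarith
  rw [← prod_range_mul_prod_Ico _ hjk]
  calc _ ≤ (∏ _i ∈ range j, (2 * j / m : ℝ)) * ∏ _i ∈ Ico j k, (2 / 3 : ℝ) :=
        mul_le_mul (prod_le_prod (fun i _ => hfactor i) hsmall)
          (prod_le_prod (fun i _ => hfactor i) hgeom) (prod_nonneg fun i _ => hfactor i)
          (by positivity)
    _ = _ := by rw [prod_const, prod_const, card_range, Nat.card_Ico]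

lemma c_mul_c_sub_le {j k n : ℕ} (hjk : j ≤ k) (hkn : 2 * k ≤ n) (hn : 4 ≤ n) :
    (c k * c (n - k) : ℝ) ≤ c n * ((4 * j / n) ^ j * (2 / 3) ^ (k - j)) := by
  have hmn : (n : ℝ) ≤ 2 * (n - k : ℕ) := by exact_mod_cast (by omega : n ≤ 2 * (n - k))
  have hm : (0 : ℝ) < (n - k : ℕ) := by exact_mod_cast (by omega : 0 < n - k)
  have hratio : 2 * j / (n - k : ℕ) ≤ (4 * j / n : ℝ) := by
    rw [div_le_div_iff₀ hm (by positivity)]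
    nlinarith [(Nat.cast_nonneg j : (0 : ℝ) ≤ j)]
  calc (c k * c (n - k) : ℝ)
      ≤ c (n - k + k) * ∏ i ∈ range k, (2 * i + 1 : ℝ) / (2 * ((n - k : ℕ) + i : ℝ) - 1) :=
        c_mul_c_le (by omega)
    _ ≤ c n * ((4 * j / n) ^ j * (2 / 3) ^ (k - j)) := by
      rw [Nat.sub_add_cancel (by omega)]
      gcongr
      exact (prod_odd_div_le hjk (by omega) (by omega)).trans (by gcongr)

lemma sum_Icc_le_two_mul_sum_Icc_half {f : ℕ → ℝ} (hf : ∀ k, 0 ≤ f k) {n : ℕ}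
    (hsymm : ∀ k ≤ n, f (n - k) = f k) (j : ℕ) :
    ∑ k ∈ Icc j (n - j), f k ≤ 2 * ∑ k ∈ Icc j (n / 2), f k := by
  have hsub : Icc j (n - j) ⊆ Icc j (n / 2) ∪ (Icc j (n / 2)).image (n - ·) := by
    intro k hk
    simp only [mem_union, mem_image, mem_Icc] at hk ⊢
    by_cases hkn : k ≤ n / 2
    · exact .inl ⟨hk.1, hkn⟩
    · exact .inr ⟨n - k, by omega, by omega⟩
  calc ∑ k ∈ Icc j (n - j), f k
      ≤ ∑ k ∈ Icc j (n / 2) ∪ (Icc j (n / 2)).image (n - ·), f k :=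
        sum_le_sum_of_subset_of_nonneg hsub fun k _ _ => hf k
    _ ≤ ∑ k ∈ Icc j (n / 2), f k + ∑ k ∈ (Icc j (n / 2)).image (n - ·), f k := by
        rw [← sum_union_inter]
        exact le_add_of_nonneg_right (sum_nonneg fun k _ => hf k)
    _ ≤ ∑ k ∈ Icc j (n / 2), f k + ∑ k ∈ Icc j (n / 2), f (n - k) :=
        add_le_add le_rfl (sum_image_le_of_nonneg fun k _ => hf _)
    _ = 2 * ∑ k ∈ Icc j (n / 2), f k := by
        rw [two_mul]
        congr 1
        exact sum_congr rfl fun k hk => hsymm k (by simp at hk; omega)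

lemma sum_Icc_geom_le (j M : ℕ) : ∑ k ∈ Icc j M, (2 / 3 : ℝ) ^ (k - j) ≤ 3 := by
  rw [← Ico_add_one_right_eq_Icc, sum_Ico_eq_sum_range]
  simp only [Nat.add_sub_cancel_left, range_eq_Ico]
  exact (geom_sum_Ico_le_of_lt_one (by norm_num) (by norm_num)).trans_eq (by norm_num)

lemma sum_c_mul_c_le (j : ℕ) {n : ℕ} (hn : 4 ≤ n) :
    ∑ k ∈ Icc j (n - j), (c k * c (n - k) : ℝ) ≤ 6 * c n * (4 * j / n) ^ j := by
  calc ∑ k ∈ Icc j (n - j), (c k * c (n - k) : ℝ)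
      ≤ 2 * ∑ k ∈ Icc j (n / 2), (c k * c (n - k) : ℝ) :=
        sum_Icc_le_two_mul_sum_Icc_half (fun k => by positivity)
          (fun k hk => by rw [Nat.sub_sub_self hk, mul_comm]) j
    _ ≤ 2 * ∑ k ∈ Icc j (n / 2), c n * ((4 * j / n : ℝ) ^ j * (2 / 3) ^ (k - j)) := by
        refine mul_le_mul_of_nonneg_left (sum_le_sum fun k hk => ?_) zero_le_two
        rw [mem_Icc] at hk
        exact c_mul_c_sub_le hk.1 (by omega) hn
    _ = 2 * (c n * (4 * j / n : ℝ) ^ j) * ∑ k ∈ Icc j (n / 2), (2 / 3 : ℝ) ^ (k - j) := by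
        rw [mul_sum, mul_sum]
        exact sum_congr rfl fun k _ => by ring
    _ ≤ 2 * (c n * (4 * j / n : ℝ) ^ j) * 3 := by
        gcongr
        exact sum_Icc_geom_le j (n / 2)
    _ = 6 * c n * (4 * j / n) ^ j := by ring

end Asymptotics

open Asymptotics Filter

/-- for fixed `j ≥ 2`,
`(n-1) · Σ_{k=j}^{n-j} c_k c_{n-k} / c_n = O(1/n^{j-1})` as `n → ∞`. -/
theorem stmt5 (j : ℕ) (hj : 2 ≤ j) :
    (fun n : ℕ => ((n : ℝ) - 1) *
        (∑ k ∈ Finset.Icc j (n - j), (c k : ℝ) * (c (n - k) : ℝ)) / (c n : ℝ))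
      =O[atTop] fun n : ℕ => 1 / (n : ℝ) ^ (j - 1) := by
  refine isBigO_iff.2 ⟨6 * (4 * j) ^ j, ?_⟩
  filter_upwards [eventually_ge_atTop 4] with n hn
  have hn' : (4 : ℝ) ≤ n := by exact_mod_cast hn
  have hcn : (0 : ℝ) < c n := by exact_mod_cast c_pos (by omega)
  have hsum := sum_c_mul_c_le j hn
  have hsum₀ : 0 ≤ ∑ k ∈ Icc j (n - j), (c k * c (n - k) : ℝ) :=
    sum_nonneg fun k _ => by positivity
  have hn₁ : (0 : ℝ) ≤ n - 1 := by linarith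
  rw [Real.norm_of_nonneg (div_nonneg (mul_nonneg hn₁ hsum₀) hcn.le),
    Real.norm_of_nonneg (by positivity), div_le_iff₀ hcn]
  have hpow : (n : ℝ) * (4 * j / n) ^ j = (4 * j) ^ j * (1 / n ^ (j - 1)) := by
    obtain ⟨i, rfl⟩ : ∃ i, j = i + 1 := ⟨j - 1, by omega⟩
    rw [Nat.add_sub_cancel, div_pow, pow_succ (n : ℝ)]
    field_simp
  calc ((n : ℝ) - 1) * ∑ k ∈ Icc j (n - j), (c k * c (n - k) : ℝ)
      ≤ n * (6 * c n * (4 * j / n) ^ j) := mul_le_mul (by linarith) hsum hsum₀ (by positivity)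
    _ = 6 * (4 * j) ^ j * (1 / n ^ (j - 1)) * c n := by
        linear_combination (6 * (c n : ℝ)) * hpow

end ChordStmt
end

section
/- In any connected chord diagram, the first terminal chord in the intersection order is the chord containing the last point 2n of the diagram. -/
open scoped Classical

/-! The intersection order of a connected diagram `S` starts with its root `r` (the chord at
the first point) and continues with the order of `S.erase r`, whose first block is the
component `K` of its new root `r'`. The chord `m` ending at the last point lies in `K`:
both `K` and the component of `m` contain chords crossed by `r`, so a path from `m` to such
a chord straddles the rightmost endpoint of `K`, and a chord straddling that point and starting
after `r'` is crossed by a chord of `K`. By induction, the order is `l₁ ++ m :: l₂` with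
no chord of `l₁` terminal, while `m` is terminal because nothing ends after it. -/

namespace ChordStmt

section

variable {S T : Finset (ℕ × ℕ)}

lemma rootChord_spec (h : S.Nonempty) :
    rootChord S ∈ S ∧ ∀ q ∈ S, (rootChord S).1 ≤ q.1 := by
  have hex : ∃ p ∈ S, ∀ q ∈ S, p.1 ≤ q.1 := S.exists_min_image Prod.fst h
  rw [rootChord, dif_pos hex]
  exact hex.choose_spec

lemma IsMatching.mono (hTS : T ⊆ S) (h : IsMatching S) : IsMatching T :=
  ⟨fun p hp => h.1 p (hTS hp), fun p hp q hq => h.2 p (hTS hp) q (hTS hq)⟩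

lemma IsMatching.not_crosses_rootChord (hM : IsMatching S) {q : ℕ × ℕ} (hq : q ∈ S)
    (hqr : q ≠ rootChord S) : ¬ crosses q (rootChord S) := fun hc => by
  obtain ⟨hrS, hrmin⟩ := rootChord_spec ⟨q, hq⟩
  have := (hM.2 _ hrS q hq (Ne.symm hqr)).1
  have := hrmin q hq
  have := hc.1
  omega

lemma Step.symm {a b : ℕ × ℕ} (h : Step T a b) : Step T b a :=
  ⟨h.2.1, h.1, h.2.2.symm⟩

lemma Reach.symm {a b : ℕ × ℕ} (h : Reach T a b) : Reach T b a := by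
  have : Std.Symm (Step T) := ⟨fun _ _ => Step.symm⟩
  exact Std.Symm.symm (r := Relation.ReflTransGen (Step T)) _ _ h

lemma Reach.componentOf {c x : ℕ × ℕ} (h : Reach T c x) : Reach (componentOf T c) c x := by
  induction h with
  | refl => exact .refl
  | tail hcb step ih =>
    exact ih.tail ⟨Finset.mem_filter.mpr ⟨step.1, hcb⟩,
      Finset.mem_filter.mpr ⟨step.2.1, hcb.tail step⟩, step.2.2⟩

lemma connectedDiagram_componentOf {c : ℕ × ℕ} (hc : c ∈ T) :
    ConnectedDiagram (componentOf T c) :=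
  ⟨⟨c, Finset.mem_filter.mpr ⟨hc, .refl⟩⟩, fun _ hp _ hq =>
    (Finset.mem_filter.mp hp).2.componentOf.symm.trans (Finset.mem_filter.mp hq).2.componentOf⟩

lemma interOrder_of_connectedDiagram (hconn : ConnectedDiagram S) :
    interOrder S = rootChord S :: interOrder (S.erase (rootChord S)) := by
  have hK : componentOf S (rootChord S) = S := Finset.filter_true_of_mem fun q hq =>
    hconn.2 _ (rootChord_spec hconn.1).1 q hq
  rw [interOrder, dif_pos hconn.1, dif_pos hK]

lemma interOrder_eq_append (h : S.Nonempty) :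
    interOrder S = interOrder (componentOf S (rootChord S)) ++
      interOrder (S \ componentOf S (rootChord S)) := by
  by_cases hK : componentOf S (rootChord S) = S
  · have : interOrder (∅ : Finset (ℕ × ℕ)) = [] := by rw [interOrder]; simp
    rw [hK, Finset.sdiff_self, this, List.append_nil]
  · rw [interOrder, dif_pos h, dif_neg hK]

lemma Reach.exists_straddle {a b : ℕ × ℕ} {t : ℕ} (h : Reach T a b) (ha : a ∈ T)
    (ha1 : a.1 ≤ t) (hb2 : t < b.2) : ∃ q ∈ T, Reach T a q ∧ q.1 ≤ t ∧ t < q.2 := by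
  suffices (b ∈ T ∧ b.1 ≤ t) ∨ ∃ q ∈ T, Reach T a q ∧ q.1 ≤ t ∧ t < q.2 by
    rcases this with ⟨hbT, hb1⟩ | h'
    exacts [⟨b, hbT, h, hb1, hb2⟩, h']
  clear hb2
  induction h with
  | refl => exact .inl ⟨ha, ha1⟩
  | @tail b c hab step ih =>
    rcases ih with ⟨hbT, hb1⟩ | h'
    · by_cases hbt : t < b.2
      · exact .inr ⟨b, hbT, hab, hb1, hbt⟩
      · rcases step.2.2 with hc | hc
        · exact .inl ⟨step.2.1, by have := hc.2.1; omega⟩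
        · exact .inl ⟨step.2.1, by have := hc.1; omega⟩
    · exact .inr h'

lemma IsMatching.reach_of_straddle (hM : IsMatching T) {a z q : ℕ × ℕ} (ha : a ∈ T)
    (haz : Reach T a z) (hzmax : ∀ w ∈ T, Reach T a w → w.2 ≤ z.2) (hq : q ∈ T)
    (haq : a.1 ≤ q.1) (hqz : q.1 ≤ z.2) (hzq : z.2 < q.2) : Reach T a q := by
  have hzT : z ∈ T := by
    rcases haz.cases_tail with rfl | ⟨_, _, step⟩
    exacts [ha, step.2.1]
  have hqz' : q.1 < z.2 := lt_of_le_of_ne hqz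
    (hM.2 q hq z hzT (by rintro rfl; omega)).2.1
  obtain ⟨w, hwT, haw, hw1, hw2⟩ := haz.exists_straddle ha haq hqz'
  by_cases hwq : w = q
  · exact hwq ▸ haw
  have hw1' : w.1 < q.1 := lt_of_le_of_ne hw1 (hM.2 w hwT q hq hwq).1
  have hwz : w.2 ≤ z.2 := hzmax w hwT haw
  exact haw.tail ⟨hwT, hq, .inl ⟨hw1', hw2, by omega⟩⟩

lemma IsMatching.exists_crosses_rootChord (hM : IsMatching S) (hconn : ConnectedDiagram S)
    {x : ℕ × ℕ} (hx : x ∈ S.erase (rootChord S)) :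
    ∃ y ∈ S.erase (rootChord S), crosses (rootChord S) y ∧
      Reach (S.erase (rootChord S)) x y := by
  set r := rootChord S
  have hxr : Reach S x r := hconn.2 x (Finset.mem_of_mem_erase hx) r (rootChord_spec hconn.1).1
  clear hconn
  induction hxr using Relation.ReflTransGen.head_induction_on with
  | refl => exact absurd rfl (Finset.ne_of_mem_erase hx)
  | @head a c step hcr ih =>
    by_cases hc : c = r
    · subst hc
      have hcross := step.2.2.resolve_left
        (hM.not_crosses_rootChord step.1 (Finset.ne_of_mem_erase hx))
      exact ⟨a, hx, hcross, .refl⟩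
    · obtain ⟨y, hy, hry, hcy⟩ := ih (Finset.mem_erase.mpr ⟨hc, step.2.1⟩)
      exact ⟨y, hy, hry, .head ⟨hx, Finset.mem_erase.mpr ⟨hc, step.2.1⟩, step.2.2⟩ hcy⟩

lemma IsMatching.reach_erase_rootChord (hM : IsMatching S) (hconn : ConnectedDiagram S)
    {m : ℕ × ℕ} (hm : m ∈ S.erase (rootChord S)) (hmax : ∀ q ∈ S, q.2 ≤ m.2) :
    Reach (S.erase (rootChord S)) (rootChord (S.erase (rootChord S))) m := by
  set r := rootChord S
  set S' := S.erase r
  have hMS' : IsMatching S' := hM.mono (Finset.erase_subset r S)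
  obtain ⟨hr'S, hr'min⟩ := rootChord_spec ⟨m, hm⟩
  set r' := rootChord S'
  obtain ⟨z, hz, hzmax⟩ := (componentOf S' r').exists_max_image Prod.snd
    ⟨r', Finset.mem_filter.mpr ⟨hr'S, .refl⟩⟩
  have hr'z : Reach S' r' z := (Finset.mem_filter.mp hz).2
  have hzmax' : ∀ w ∈ S', Reach S' r' w → w.2 ≤ z.2 :=
    fun w hw hr'w => hzmax w (Finset.mem_filter.mpr ⟨hw, hr'w⟩)
  by_cases hzm : z = m
  · exact hzm ▸ hr'z
  have hzS : z ∈ S := Finset.mem_of_mem_erase (Finset.mem_filter.mp hz).1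
  have hzm2 : z.2 < m.2 := lt_of_le_of_ne (hmax z hzS)
    (hM.2 z hzS m (Finset.mem_of_mem_erase hm) hzm).2.2.2
  obtain ⟨ym, hym, hrym, hmym⟩ := hM.exists_crosses_rootChord hconn hm
  obtain ⟨yr, hyr, hryr, hr'yr⟩ := hM.exists_crosses_rootChord hconn hr'S
  have hyrz : yr.2 ≤ z.2 := hzmax' yr hyr hr'yr
  -- both `ym` and `yr` are crossed by `r`, so `ym.1 < r.2 < yr.2`
  have hymz : ym.1 ≤ z.2 := by have := hrym.2.1; have := hryr.2.2; omega
  obtain ⟨q, hq, hymq, hqz, hzq⟩ := hmym.symm.exists_straddle hym hymz hzm2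
  exact (hMS'.reach_of_straddle hr'S hr'z hzmax' hq (hr'min q hq) hqz hzq).trans
    (hymq.symm.trans hmym.symm)

lemma IsMatching.exists_interOrder_eq (hM : IsMatching S) (hconn : ConnectedDiagram S)
    {m : ℕ × ℕ} (hm : m ∈ S) (hmax : ∀ q ∈ S, q.2 ≤ m.2) :
    ∃ l₁ l₂, interOrder S = l₁ ++ m :: l₂ ∧ ∀ p ∈ l₁, ∃ q ∈ S, crosses p q := by
  induction S using Finset.strongInduction generalizing m with
  | _ S ih =>
    rw [interOrder_of_connectedDiagram hconn]
    set r := rootChord S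
    have hr : r ∈ S := (rootChord_spec hconn.1).1
    by_cases hrm : r = m
    · exact ⟨[], _, by rw [hrm]; rfl, by simp⟩
    set S' := S.erase r
    have hmS' : m ∈ S' := Finset.mem_erase.mpr ⟨Ne.symm hrm, hm⟩
    obtain ⟨c, hc, hrc, -⟩ := hM.exists_crosses_rootChord hconn hmS'
    set K := componentOf S' (rootChord S')
    have hKS : K ⊆ S := (Finset.filter_subset _ _).trans (Finset.erase_subset r S)
    obtain ⟨l₁, l₂, hK, hl₁⟩ := ih K
      ((Finset.filter_subset _ _).trans_ssubset (Finset.erase_ssubset hr))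
      (hM.mono hKS) (connectedDiagram_componentOf (rootChord_spec ⟨m, hmS'⟩).1)
      (Finset.mem_filter.mpr ⟨hmS', hM.reach_erase_rootChord hconn hmS' hmax⟩)
      (fun q hq => hmax q (hKS hq))
    refine ⟨r :: l₁, l₂ ++ interOrder (S' \ K), ?_, ?_⟩
    · rw [interOrder_eq_append ⟨m, hmS'⟩, hK]
      simp [K]
    · rintro p (_ | ⟨_, hp⟩)
      · exact ⟨c, Finset.mem_of_mem_erase hc, hrc⟩
      · obtain ⟨q, hq, hpq⟩ := hl₁ p hp
        exact ⟨q, hKS hq, hpq⟩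

end

lemma IsDiagramOn.exists_snd_eq_two_mul {n : ℕ} {D : Finset (ℕ × ℕ)} (hD : IsDiagramOn n D)
    (hne : D.Nonempty) : ∃ m ∈ D, m.2 = 2 * n ∧ ∀ q ∈ D, q.2 ≤ m.2 := by
  obtain ⟨m, hm, hmax⟩ := D.exists_max_image Prod.snd hne
  have hm2 : m.2 ∈ Finset.Icc 1 (2 * n) := by
    rw [← hD.2, points, Finset.mem_biUnion]
    exact ⟨m, hm, by simp⟩
  rw [Finset.mem_Icc] at hm2
  obtain ⟨p, hp, hp2n⟩ : ∃ p ∈ D, 2 * n ∈ ({p.1, p.2} : Finset ℕ) := by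
    rw [← Finset.mem_biUnion, ← points, hD.2, Finset.mem_Icc]
    omega
  have hpm : p.2 ≤ m.2 := hmax p hp
  have := hD.1.1 p hp
  refine ⟨m, hm, ?_, hmax⟩
  simp only [Finset.mem_insert, Finset.mem_singleton] at hp2n
  omega

lemma List.exists_first_of_eq_append {α : Type*} {P : α → Prop} {l l₁ l₂ : List α} {m : α}
    (hl : l = l₁ ++ m :: l₂) (hm : P m) (hl₁ : ∀ p ∈ l₁, ¬ P p) :
    ∃ i : Fin l.length, P (l.get i) ∧ (∀ j : Fin l.length, P (l.get j) → (i : ℕ) ≤ j) ∧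
      l.get i = m := by
  subst hl
  have hget : (l₁ ++ m :: l₂)[l₁.length] = m := by simp
  refine ⟨⟨l₁.length, by simp⟩, by simpa [hget], fun j hj => ?_, hget⟩
  by_contra! hj₁
  exact hl₁ _ (List.getElem_mem hj₁) (by simpa [List.getElem_append_left hj₁] using hj)

theorem stmt15_general (n : ℕ) (D : Finset (ℕ × ℕ))
    (hD : IsDiagramOn n D) (hconn : ConnectedDiagram D) :
    ∃ i : Fin (interOrder D).length,
      IsTerminal D ((interOrder D).get i) ∧
      (∀ j : Fin (interOrder D).length,
        IsTerminal D ((interOrder D).get j) → (i : ℕ) ≤ (j : ℕ)) ∧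
      ((interOrder D).get i).2 = 2 * n := by
  obtain ⟨m, hm, hm2n, hmax⟩ := hD.exists_snd_eq_two_mul hconn.1
  obtain ⟨l₁, l₂, hl, hl₁⟩ := hD.1.exists_interOrder_eq hconn hm hmax
  have hterm : IsTerminal D m := ⟨hm, fun q hq hmq => by have := hmax q hq; have := hmq.2.2; omega⟩
  obtain ⟨i, hi, hfirst, him⟩ := List.exists_first_of_eq_append (P := IsTerminal D) hl hterm
    fun p hp hpt => by obtain ⟨q, hq, hpq⟩ := hl₁ p hp; exact hpt.2 q hq hpq
  exact ⟨i, hi, hfirst, him ▸ hm2n⟩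

/-- in any connected chord diagram on `{1,…,2n}`, the first terminal
chord in the intersection order is the chord containing the last point `2n`. -/
theorem stmt15 (n : ℕ) (D : Finset (ℕ × ℕ)) (hn : 1 ≤ n)
    (hD : IsDiagramOn n D) (hconn : ConnectedDiagram D) :
    ∃ i : Fin (interOrder D).length,
      IsTerminal D ((interOrder D).get i) ∧
      (∀ j : Fin (interOrder D).length,
        IsTerminal D ((interOrder D).get j) → (i : ℕ) ≤ (j : ℕ)) ∧
      ((interOrder D).get i).2 = 2 * n :=
  stmt15_general n D hD hconn

end ChordStmt
end
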